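/- arXiv:1810.01340 — 2 statements merged into one kernel-verified Lean document; each statement's English description precedes it below -/
import Mathlib

section
/- If a metric space X admits a contracting barycenter map b : P₁(X) → X, then X admits a conical geodesic bicombing, given by σ(x, y, t) := b((1−t)·δ_x + t·δ_y). -/
open MeasureTheory ENNReal

/-- `K` is a coupling of `μ` and `ν`. -/
def IsCoupling {X : Type} [MeasurableSpace X]
    (K : Measure (X × X)) (μ ν : Measure X) : Prop :=
  K.map Prod.fst = μ ∧ K.map Prod.snd = ν

/-- The Wasserstein-1 distance: infimal transport cost over couplings. -/
noncomputable def W1 {X : Type} [MeasurableSpace X] [PseudoEMetricSpace X]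
    (μ ν : Measure X) : ℝ≥0∞ :=
  ⨅ K : {K : Measure (X × X) // IsCoupling K μ ν}, ∫⁻ p, edist p.1 p.2 ∂K.1

/-- `μ` is separably supported. -/
def SepSupp {X : Type} [MeasurableSpace X] [TopologicalSpace X] (μ : Measure X) : Prop :=
  ∃ s : Set X, TopologicalSpace.IsSeparable s ∧ μ sᶜ = 0

/-- `μ` belongs to the Wasserstein-1 space `P₁(X)`: a separably supported Borel
probability measure at finite Wasserstein-1 distance from the Dirac measures. -/
def InP1 {X : Type} [MeasurableSpace X] [MetricSpace X] (μ : Measure X) : Prop :=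
  IsProbabilityMeasure μ ∧ SepSupp μ ∧ ∃ x : X, W1 μ (Measure.dirac x) < ⊤

/-- A conical geodesic bicombing on a metric space: `σ x y` is a constant-speed
geodesic from `x` to `y` (parametrized on `[0,1]`) and the conical convexity
inequality holds. -/
def IsConicalBicombing {X : Type} [MetricSpace X] (σ : X → X → ℝ → X) : Prop :=
  (∀ x y : X, σ x y 0 = x ∧ σ x y 1 = y) ∧
  (∀ x y : X, ∀ s ∈ Set.Icc (0:ℝ) 1, ∀ t ∈ Set.Icc (0:ℝ) 1,
    dist (σ x y s) (σ x y t) = |s - t| * dist x y) ∧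
  (∀ x x' y y' : X, ∀ t ∈ Set.Icc (0:ℝ) 1,
    dist (σ x y t) (σ x' y' t) ≤ (1 - t) * dist x x' + t * dist y y')

/-!
Write `σ_t = b((1-t)δ_x + tδ_y)`. Two-point measures are finitely supported, hence in `P₁(X)`, and
explicit couplings bound `W₁((1-s)δ_x + sδ_y, (1-t)δ_x + tδ_y)` by `|s - t|·d(x,y)` and
`W₁((1-t)δ_x + tδ_y, (1-t)δ_x' + tδ_y')` by `(1-t)·d(x,x') + t·d(y,y')`. As `b` is 1-Lipschitz, this
gives the conical inequality and `d(σ_s, σ_t) ≤ |s - t|·d(x,y)`; the latter is an equality because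
`d(x,y) ≤ d(x,σ_s) + d(σ_s,σ_t) + d(σ_t,y)` and the outer terms are at most `s·d(x,y)` and
`(1-t)·d(x,y)`.
-/

theorem lintegral_dirac_le {α : Type*} [MeasurableSpace α] (a : α) (f : α → ℝ≥0∞) :
    ∫⁻ x, f x ∂Measure.dirac a ≤ f a := by
  obtain ⟨g, hg, hgf, hfg⟩ := exists_measurable_le_lintegral_eq (Measure.dirac a) f
  rw [hfg, lintegral_dirac' a hg]
  exact hgf a

section Coupling

variable {X : Type} [MeasurableSpace X]

theorem isCoupling_dirac (x y : X) :
    IsCoupling (Measure.dirac (x, y)) (Measure.dirac x) (Measure.dirac y) :=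
  ⟨Measure.map_dirac' measurable_fst _, Measure.map_dirac' measurable_snd _⟩

theorem IsCoupling.add {K K' : Measure (X × X)} {μ ν μ' ν' : Measure X}
    (h : IsCoupling K μ ν) (h' : IsCoupling K' μ' ν') : IsCoupling (K + K') (μ + μ') (ν + ν') :=
  ⟨by rw [Measure.map_add _ _ measurable_fst, h.1, h'.1],
    by rw [Measure.map_add _ _ measurable_snd, h.2, h'.2]⟩

theorem IsCoupling.smul {K : Measure (X × X)} {μ ν : Measure X} (h : IsCoupling K μ ν)
    (c : ℝ≥0∞) :
    IsCoupling (c • K) (c • μ) (c • ν) :=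
  ⟨by rw [Measure.map_smul, h.1], by rw [Measure.map_smul, h.2]⟩

theorem W1_le_lintegral_of_isCoupling [PseudoEMetricSpace X] {K : Measure (X × X)}
    {μ ν : Measure X} (h : IsCoupling K μ ν) : W1 μ ν ≤ ∫⁻ p, edist p.1 p.2 ∂K :=
  iInf_le (fun K : {K : Measure (X × X) // IsCoupling K μ ν} => ∫⁻ p, edist p.1 p.2 ∂K.1) ⟨K, h⟩

end Coupling

section MixDirac

variable {X : Type} [MeasurableSpace X]

noncomputable def mixDirac (x y : X) (t : ℝ) : Measure X :=
  ENNReal.ofReal (1 - t) • Measure.dirac x + ENNReal.ofReal t • Measure.dirac y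

@[simp]
theorem mixDirac_zero (x y : X) : mixDirac x y 0 = Measure.dirac x := by
  simp [mixDirac]

@[simp]
theorem mixDirac_one (x y : X) : mixDirac x y 1 = Measure.dirac y := by
  simp [mixDirac]

theorem ofReal_one_sub_add_ofReal {t : ℝ} (ht : t ∈ Set.Icc (0 : ℝ) 1) :
    ENNReal.ofReal (1 - t) + ENNReal.ofReal t = 1 := by
  rw [← ENNReal.ofReal_add (sub_nonneg.2 ht.2) ht.1, sub_add_cancel, ENNReal.ofReal_one]

theorem isProbabilityMeasure_mixDirac (x y : X) {t : ℝ} (ht : t ∈ Set.Icc (0 : ℝ) 1) :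
    IsProbabilityMeasure (mixDirac x y t) :=
  ⟨by simp [mixDirac, ofReal_one_sub_add_ofReal ht]⟩

theorem mixDirac_self (x : X) {t : ℝ} (ht : t ∈ Set.Icc (0 : ℝ) 1) :
    mixDirac x x t = Measure.dirac x := by
  rw [mixDirac, ← add_smul, ofReal_one_sub_add_ofReal ht, one_smul]

variable [PseudoEMetricSpace X]

theorem W1_mixDirac_endpoints_le (x x' y y' : X) (t : ℝ) :
    W1 (mixDirac x y t) (mixDirac x' y' t)
      ≤ ENNReal.ofReal (1 - t) * edist x x' + ENNReal.ofReal t * edist y y' := by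
  refine (W1_le_lintegral_of_isCoupling
    (((isCoupling_dirac x x').smul _).add ((isCoupling_dirac y y').smul _))).trans ?_
  rw [lintegral_add_measure, lintegral_smul_measure, lintegral_smul_measure, smul_eq_mul,
    smul_eq_mul]
  gcongr <;> exact lintegral_dirac_le _ (fun p : X × X => edist p.1 p.2)

theorem W1_mixDirac_param_le (x y : X) {s t : ℝ} (hs : 0 ≤ s) (hst : s ≤ t) (ht : t ≤ 1) :
    W1 (mixDirac x y s) (mixDirac x y t) ≤ ENNReal.ofReal (t - s) * edist x y := by
  -- mass `1 - t` stays at `x`, mass `s` stays at `y`, and mass `t - s` moves from `x` to `y`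
  have hK := (((isCoupling_dirac x x).smul (ENNReal.ofReal (1 - t))).add
    ((isCoupling_dirac x y).smul (ENNReal.ofReal (t - s)))).add
    ((isCoupling_dirac y y).smul (ENNReal.ofReal s))
  have hfst : ENNReal.ofReal (1 - t) • Measure.dirac x + ENNReal.ofReal (t - s) • Measure.dirac x
      + ENNReal.ofReal s • Measure.dirac y = mixDirac x y s := by
    rw [← add_smul, ← ENNReal.ofReal_add (by linarith) (by linarith)]
    congr 3; ring
  have hsnd : ENNReal.ofReal (1 - t) • Measure.dirac x + ENNReal.ofReal (t - s) • Measure.dirac y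
      + ENNReal.ofReal s • Measure.dirac y = mixDirac x y t := by
    rw [add_assoc, ← add_smul, ← ENNReal.ofReal_add (by linarith) hs]
    congr 3; ring
  rw [hfst, hsnd] at hK
  refine (W1_le_lintegral_of_isCoupling hK).trans ?_
  simp only [lintegral_add_measure, lintegral_smul_measure, smul_eq_mul]
  calc _ ≤ ENNReal.ofReal (1 - t) * edist x x + ENNReal.ofReal (t - s) * edist x y
        + ENNReal.ofReal s * edist y y := by
          gcongr <;> exact lintegral_dirac_le _ (fun p : X × X => edist p.1 p.2)
    _ = ENNReal.ofReal (t - s) * edist x y := by simp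

end MixDirac

theorem inP1_mixDirac {X : Type} [MetricSpace X] [MeasurableSpace X] [OpensMeasurableSpace X]
    (x y : X) {t : ℝ} (ht : t ∈ Set.Icc (0 : ℝ) 1) : InP1 (mixDirac x y t) := by
  refine ⟨isProbabilityMeasure_mixDirac x y ht, ⟨{x, y}, (Set.toFinite _).isSeparable, ?_⟩, x, ?_⟩
  · simp [mixDirac]
  · calc W1 (mixDirac x y t) (Measure.dirac x)
        = W1 (mixDirac x y t) (mixDirac x x t) := by rw [mixDirac_self x ht]
      _ ≤ ENNReal.ofReal (1 - t) * edist x x + ENNReal.ofReal t * edist y x :=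
          W1_mixDirac_endpoints_le ..
      _ < ⊤ := by simpa using ENNReal.mul_lt_top ENNReal.ofReal_lt_top (edist_lt_top y x)

theorem dist_eq_abs_sub_mul_of_forall_dist_le {X : Type} [PseudoMetricSpace X] {γ : ℝ → X}
    {x y : X} (h0 : γ 0 = x) (h1 : γ 1 = y)
    (hγ : ∀ s t, 0 ≤ s → s ≤ t → t ≤ 1 → dist (γ s) (γ t) ≤ (t - s) * dist x y)
    {s t : ℝ} (hs : s ∈ Set.Icc (0 : ℝ) 1) (ht : t ∈ Set.Icc (0 : ℝ) 1) :
    dist (γ s) (γ t) = |s - t| * dist x y := by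
  wlog hst : s ≤ t generalizing s t
  · rw [dist_comm, this ht hs (le_of_not_ge hst), abs_sub_comm]
  have hxs := hγ 0 s le_rfl hs.1 hs.2
  have hty := hγ t 1 ht.1 ht.2 le_rfl
  rw [h0] at hxs
  rw [h1] at hty
  have htri := dist_triangle4 x (γ s) (γ t) y
  rw [abs_of_nonpos (by linarith), neg_sub]
  refine le_antisymm (hγ s t hs.1 hst ht.2) ?_
  linarith

section Barycenter

variable {X : Type} [MetricSpace X] [MeasurableSpace X] {b : Measure X → X}

theorem dist_le_of_W1_le
    (hb : ∀ μ ν : Measure X, InP1 μ → InP1 ν → edist (b μ) (b ν) ≤ W1 μ ν)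
    {μ ν : Measure X} (hμ : InP1 μ) (hν : InP1 ν) {r : ℝ} (hr : 0 ≤ r)
    (h : W1 μ ν ≤ ENNReal.ofReal r) : dist (b μ) (b ν) ≤ r :=
  (edist_le_ofReal hr).1 ((hb μ ν hμ hν).trans h)

variable [OpensMeasurableSpace X]

theorem dist_barycenter_mixDirac_param_le
    (hb : ∀ μ ν : Measure X, InP1 μ → InP1 ν → edist (b μ) (b ν) ≤ W1 μ ν)
    (x y : X) {s t : ℝ} (hs : 0 ≤ s) (hst : s ≤ t) (ht : t ≤ 1) :
    dist (b (mixDirac x y s)) (b (mixDirac x y t)) ≤ (t - s) * dist x y := by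
  have hts : 0 ≤ t - s := sub_nonneg.2 hst
  refine dist_le_of_W1_le hb (inP1_mixDirac x y ⟨hs, hst.trans ht⟩)
    (inP1_mixDirac x y ⟨hs.trans hst, ht⟩) (mul_nonneg hts dist_nonneg) ?_
  rw [ENNReal.ofReal_mul hts, ← edist_dist]
  exact W1_mixDirac_param_le x y hs hst ht

theorem dist_barycenter_mixDirac_endpoints_le
    (hb : ∀ μ ν : Measure X, InP1 μ → InP1 ν → edist (b μ) (b ν) ≤ W1 μ ν)
    (x x' y y' : X) {t : ℝ} (ht : t ∈ Set.Icc (0 : ℝ) 1) :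
    dist (b (mixDirac x y t)) (b (mixDirac x' y' t)) ≤ (1 - t) * dist x x' + t * dist y y' := by
  have h1t : 0 ≤ 1 - t := sub_nonneg.2 ht.2
  have hx := mul_nonneg h1t (dist_nonneg (x := x) (y := x'))
  have hy := mul_nonneg ht.1 (dist_nonneg (x := y) (y := y'))
  refine dist_le_of_W1_le hb (inP1_mixDirac x y ht) (inP1_mixDirac x' y' ht) (add_nonneg hx hy) ?_
  rw [ENNReal.ofReal_add hx hy, ENNReal.ofReal_mul h1t, ENNReal.ofReal_mul ht.1, ← edist_dist,
    ← edist_dist]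
  exact W1_mixDirac_endpoints_le x x' y y' t

end Barycenter

theorem stmt_9 {X : Type} [MetricSpace X] [MeasurableSpace X] [BorelSpace X]
    (b : Measure X → X)
    (hb_dirac : ∀ x : X, b (Measure.dirac x) = x)
    (hb_contract : ∀ μ ν : Measure X, InP1 μ → InP1 ν → edist (b μ) (b ν) ≤ W1 μ ν) :
    IsConicalBicombing (fun x y t =>
      b (ENNReal.ofReal (1 - t) • Measure.dirac x + ENNReal.ofReal t • Measure.dirac y)) := by
  change IsConicalBicombing fun x y t => b (mixDirac x y t)
  have hend : ∀ x y : X, b (mixDirac x y 0) = x ∧ b (mixDirac x y 1) = y := fun x y => by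
    simp [hb_dirac]
  refine ⟨hend, fun x y s hs t ht => ?_, fun x x' y y' t ht => ?_⟩
  · exact dist_eq_abs_sub_mul_of_forall_dist_le (hend x y).1 (hend x y).2
      (fun _ _ => dist_barycenter_mixDirac_param_le hb_contract x y) hs ht
  · exact dist_barycenter_mixDirac_endpoints_le hb_contract x x' y y' ht
end

section
/- Let γ ∈ (0, π/2), and for a ∈ (0, π/2], t ∈ [−π, π] define g(a,t) := sin(a−t)·cot(γ)/√(sin²a + cot²γ·sin²(a−t)) + (t/π)·cot(γ)/√(sin²a + cot²γ). Then for each fixed t ∈ [0, π], the function a ↦ g(a,t) is nondecreasing on [max{0, t − π/2}, π/2]. -/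
open Real

noncomputable def g (γ a t : ℝ) : ℝ :=
  Real.sin (a - t) * (Real.cos γ / Real.sin γ) /
      Real.sqrt (Real.sin a ^ 2 + (Real.cos γ / Real.sin γ) ^ 2 * Real.sin (a - t) ^ 2) +
    t / π * (Real.cos γ / Real.sin γ) /
      Real.sqrt (Real.sin a ^ 2 + (Real.cos γ / Real.sin γ) ^ 2)

/-!
With `c = cot γ > 0`, the derivative in `a` of `g γ a t` is
`c sin a (sin t / D₁^{3/2} - (t/π) cos a / D₂^{3/2})` where
`D₁ = sin² a + c² sin² (a - t) ≤ D₂ = sin² a + c²`. It is nonnegative because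
`(t/π) cos a ≤ sin t` on the interval: for `t ≤ π/2` this is Jordan's inequality `2t/π ≤ sin t`,
and for `t > π/2` it follows from `cos a ≤ cos (t - π/2) = sin t`. The case `t = 0`, where `D₁`
vanishes at `a = 0`, is a direct computation: `g` is `0` at `a = 0` and constant afterwards.
-/

noncomputable def gCot (c a t : ℝ) : ℝ :=
  sin (a - t) * c / √(sin a ^ 2 + c ^ 2 * sin (a - t) ^ 2) + t / π * c / √(sin a ^ 2 + c ^ 2)

lemma hasDerivAt_sin_sub_mul_div_sqrt (c t a : ℝ) (hD : 0 < sin a ^ 2 + c ^ 2 * sin (a - t) ^ 2) :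
    HasDerivAt (fun x => sin (x - t) * c / √(sin x ^ 2 + c ^ 2 * sin (x - t) ^ 2))
      (c * sin a * sin t /
        ((sin a ^ 2 + c ^ 2 * sin (a - t) ^ 2) * √(sin a ^ 2 + c ^ 2 * sin (a - t) ^ 2))) a := by
  have hs : HasDerivAt (fun x => sin (x - t)) (cos (a - t)) a := by
    simpa using ((hasDerivAt_id a).sub_const t).sin
  have hD' : HasDerivAt (fun x => sin x ^ 2 + c ^ 2 * sin (x - t) ^ 2)
      (2 * sin a * cos a + c ^ 2 * (2 * sin (a - t) * cos (a - t))) a :=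
    (((hasDerivAt_id' a).sin.pow 2).add ((hs.pow 2).const_mul (c ^ 2))).congr_deriv (by simp)
  refine ((hs.mul_const c).div (hD'.sqrt hD.ne') (sqrt_pos.2 hD).ne').congr_deriv ?_
  have hr2 := sq_sqrt hD.le
  -- `sin t = sin (a - (a - t))` expands to the numerator produced by the quotient rule
  rw [show sin t = sin a * cos (a - t) - cos a * sin (a - t) by
    rw [← sin_sub, sub_sub_cancel]]
  field_simp
  linear_combination (-(c * sin a * (sin a * cos (a - t) - cos a * sin (a - t))) +
      c * (sin a ^ 2 + c ^ 2 * sin (a - t) ^ 2) * cos (a - t)) * hr2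

lemma hasDerivAt_const_div_sqrt_sin_sq_add (c k a : ℝ) (hD : 0 < sin a ^ 2 + c ^ 2) :
    HasDerivAt (fun x => k / √(sin x ^ 2 + c ^ 2))
      (-(k * (sin a * cos a) / ((sin a ^ 2 + c ^ 2) * √(sin a ^ 2 + c ^ 2)))) a := by
  have hD' : HasDerivAt (fun x => sin x ^ 2 + c ^ 2) (2 * sin a * cos a) a :=
    (((hasDerivAt_id' a).sin.pow 2).add_const (c ^ 2)).congr_deriv (by simp)
  refine ((hasDerivAt_const a k).div (hD'.sqrt hD.ne') (sqrt_pos.2 hD).ne').congr_deriv ?_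
  have hr2 := sq_sqrt hD.le
  field_simp
  rw [hr2]
  ring

lemma hasDerivAt_gCot (c t a : ℝ) (hD : 0 < sin a ^ 2 + c ^ 2 * sin (a - t) ^ 2) :
    HasDerivAt (gCot c · t)
      (c * sin a * sin t /
          ((sin a ^ 2 + c ^ 2 * sin (a - t) ^ 2) * √(sin a ^ 2 + c ^ 2 * sin (a - t) ^ 2)) -
        t / π * c * (sin a * cos a) / ((sin a ^ 2 + c ^ 2) * √(sin a ^ 2 + c ^ 2))) a := by
  have hD₂ : 0 < sin a ^ 2 + c ^ 2 := by nlinarith [sin_sq_le_one (a - t), sq_nonneg c]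
  have h := (hasDerivAt_sin_sub_mul_div_sqrt c t a hD).add
    (hasDerivAt_const_div_sqrt_sin_sq_add c (t / π * c) a hD₂)
  rw [← sub_eq_add_neg] at h
  exact h

lemma div_mul_sqrt_le_div_mul_sqrt {u v p q : ℝ} (hu : u ≤ v) (hv : 0 ≤ v) (hp : 0 < p)
    (hpq : p ≤ q) : u / (q * √q) ≤ v / (p * √p) := by
  have : 0 < p * √p := mul_pos hp (sqrt_pos.2 hp)
  have : 0 ≤ q := hp.le.trans hpq
  gcongr

lemma div_pi_mul_cos_le_sin {t x : ℝ} (ht₀ : 0 ≤ t) (htπ : t ≤ π) (hx : t - π / 2 ≤ x)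
    (hx' : x ≤ π / 2) : t / π * cos x ≤ sin t := by
  have htπ' : 0 ≤ t / π := div_nonneg ht₀ pi_pos.le
  rcases le_or_gt t (π / 2) with ht | ht
  · calc t / π * cos x ≤ t / π := mul_le_of_le_one_right htπ' (cos_le_one x)
      _ ≤ 2 / π * t := by rw [div_mul_eq_mul_div]; gcongr; linarith
      _ ≤ sin t := mul_le_sin ht₀ ht
  · have hcos : 0 ≤ cos x := cos_nonneg_of_mem_Icc ⟨by linarith, hx'⟩
    calc t / π * cos x ≤ cos x := mul_le_of_le_one_left hcos ((div_le_one pi_pos).2 htπ)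
      _ ≤ cos (t - π / 2) := cos_le_cos_of_nonneg_of_le_pi (by linarith) (by linarith) hx
      _ = sin t := by rw [cos_sub_pi_div_two]

lemma sin_sq_add_sq_mul_sin_sub_sq_pos {c t a : ℝ} (hc : c ≠ 0) (ht₀ : 0 < t)
    (ha : a ∈ Set.Icc (max 0 (t - π / 2)) (π / 2)) :
    0 < sin a ^ 2 + c ^ 2 * sin (a - t) ^ 2 := by
  obtain ⟨ha₀, hat⟩ := max_le_iff.1 ha.1
  rcases ha₀.eq_or_lt with rfl | ha₀
  · have : 0 < sin t := sin_pos_of_pos_of_lt_pi ht₀ (by linarith)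
    simp only [zero_sub, sin_neg, neg_sq, sin_zero]
    positivity
  · have : 0 < sin a := sin_pos_of_pos_of_lt_pi ha₀ (by linarith [ha.2])
    positivity

lemma gCot_zero_right_of_sin_pos (c : ℝ) {a : ℝ} (ha : 0 < sin a) :
    gCot c a 0 = c / √(1 + c ^ 2) := by
  have h : √(sin a ^ 2 + c ^ 2 * sin a ^ 2) = sin a * √(1 + c ^ 2) := by
    rw [show sin a ^ 2 + c ^ 2 * sin a ^ 2 = sin a ^ 2 * (1 + c ^ 2) by ring,
      sqrt_mul (sq_nonneg _), sqrt_sq ha.le]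
  have : 0 < √(1 + c ^ 2) := sqrt_pos.2 (by positivity)
  simp only [gCot, sub_zero, zero_div, zero_mul, add_zero, h]
  field_simp

lemma monotoneOn_gCot_zero_right {c : ℝ} (hc : 0 ≤ c) :
    MonotoneOn (gCot c · 0) (Set.Icc 0 (π / 2)) := by
  have hpos : ∀ a ∈ Set.Ioc 0 (π / 2), 0 < sin a :=
    fun a ha => sin_pos_of_pos_of_lt_pi ha.1 (by linarith [ha.2, pi_pos])
  rintro x ⟨hx₀, -⟩ y ⟨hy₀, hy⟩ hxy
  rcases hx₀.eq_or_lt with rfl | hx₀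
  · rcases hy₀.eq_or_lt with rfl | hy₀
    · rfl
    · calc gCot c 0 0 = 0 := by simp [gCot]
        _ ≤ gCot c y 0 := by rw [gCot_zero_right_of_sin_pos c (hpos y ⟨hy₀, hy⟩)]; positivity
  · simp only [gCot_zero_right_of_sin_pos c (hpos x ⟨hx₀, hxy.trans hy⟩),
      gCot_zero_right_of_sin_pos c (hpos y ⟨hx₀.trans_le hxy, hy⟩), le_refl]

theorem monotoneOn_gCot {c t : ℝ} (hc : 0 < c) (ht : t ∈ Set.Icc 0 π) :
    MonotoneOn (gCot c · t) (Set.Icc (max 0 (t - π / 2)) (π / 2)) := by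
  obtain ⟨ht₀, htπ⟩ := ht
  rcases ht₀.eq_or_lt with rfl | ht₀
  · rw [zero_sub, max_eq_left (by linarith [pi_pos])]
    exact monotoneOn_gCot_zero_right hc.le
  have hderiv a (ha : a ∈ Set.Icc (max 0 (t - π / 2)) (π / 2)) :=
    hasDerivAt_gCot c t a (sin_sq_add_sq_mul_sin_sub_sq_pos hc.ne' ht₀ ha)
  refine monotoneOn_of_hasDerivWithinAt_nonneg (convex_Icc _ _)
    (fun a ha => (hderiv a ha).continuousAt.continuousWithinAt)
    (fun a ha => (hderiv a (interior_subset ha)).hasDerivWithinAt) ?_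
  intro a ha
  rw [interior_Icc] at ha
  obtain ⟨ha₀, hat⟩ := max_lt_iff.1 ha.1
  have hsin : 0 < sin a := sin_pos_of_pos_of_lt_pi ha₀ (by linarith [ha.2])
  have hD₁ := sin_sq_add_sq_mul_sin_sub_sq_pos hc.ne' ht₀ (Set.Ioo_subset_Icc_self ha)
  have hD : sin a ^ 2 + c ^ 2 * sin (a - t) ^ 2 ≤ sin a ^ 2 + c ^ 2 := by
    nlinarith [sin_sq_le_one (a - t), sq_nonneg c]
  have hsint : 0 ≤ sin t := sin_nonneg_of_nonneg_of_le_pi ht₀.le htπ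
  have hkey := div_pi_mul_cos_le_sin ht₀.le htπ hat.le ha.2.le
  rw [sub_nonneg]
  refine div_mul_sqrt_le_div_mul_sqrt ?_ (by positivity) hD₁ hD
  calc t / π * c * (sin a * cos a) = c * sin a * (t / π * cos a) := by ring
    _ ≤ c * sin a * sin t := by gcongr

theorem stmt_13 (γ : ℝ) (hγ : γ ∈ Set.Ioo 0 (π / 2)) :
    ∀ t ∈ Set.Icc (0:ℝ) π,
      MonotoneOn (fun a => g γ a t) (Set.Icc (max 0 (t - π / 2)) (π / 2)) := by
  obtain ⟨hγ₀, hγ⟩ := hγ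
  have hcot : 0 < cos γ / sin γ :=
    div_pos (cos_pos_of_mem_Ioo ⟨by linarith [pi_pos], hγ⟩)
      (sin_pos_of_pos_of_lt_pi hγ₀ (by linarith [pi_pos]))
  exact fun t ht => monotoneOn_gCot hcot ht
end
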